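/- Lemma 3.4 (deterministic algebra bound for one projected-GD step). Let U and U* be n×r real matrices with orthonormal columns, let b̂_k ∈ ℝ^r for k ∈ [q], let a_ki ∈ ℝⁿ and y_ki ∈ ℝ for k ∈ [q], i ∈ [m], and let η > 0, m ≥ 1. Define: GradU := Σ_{k,i}(a_kiᵀUb̂_k − y_ki)·a_ki·b̂_kᵀ (an n×r matrix); Term2 := (I − U*U*ᵀ)·Σ_{k,i}(y_ki − a_kiᵀU*U*ᵀUb̂_k)·a_ki·b̂_kᵀ; and let Hess := Σ_{k,i} vec(a_ki b̂_kᵀ)·vec(a_ki b̂_kᵀ)ᵀ be the nr×nr positive semidefinite matrix whose quadratic form satisfies vec(W)ᵀ·Hess·vec(W) = Σ_{k,i}(a_kiᵀWb̂_k)² for every n×r matrix W. Let Û⁺ := U − (η/m)·GradU, and suppose Û⁺ = U⁺R⁺ where U⁺ is n×r with orthonormal columns and R⁺ is an invertible r×r matrix. If (η/m)·‖GradU‖ < 1, then ‖(I − U*U*ᵀ)U⁺‖_F ≤ [ ‖I_{nr} − (η/m)·Hess‖·‖(I − U*U*ᵀ)U‖_F + (η/m)·‖Term2‖_F ] / (1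 − (η/m)·‖GradU‖). -/

import Mathlib

open MeasureTheory ProbabilityTheory Matrix
open scoped ENNReal

noncomputable section

/-- Euclidean norm of a finitely-indexed real vector. -/
def vnorm {ι : Type*} [Fintype ι] (v : ι → ℝ) : ℝ := Real.sqrt (∑ i, v i ^ 2)

/-- Frobenius norm of a real matrix. -/
def frob {ι ι' : Type*} [Fintype ι] [Fintype ι'] (M : Matrix ι ι' ℝ) : ℝ :=
  Real.sqrt (∑ i, ∑ j, M i j ^ 2)

/-- Spectral (ℓ2 operator) norm of a real matrix. -/
def spec {ι ι' : Type*} [Fintype ι] [Fintype ι'] (M : Matrix ι ι' ℝ) : ℝ :=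
  sSup {c | ∃ z, vnorm z = 1 ∧ c = vnorm (M.mulVec z)}

/-- Smallest singular value of an r×q matrix with r ≤ q (or of a square matrix):
the minimum of ‖Bᵀw‖ over unit vectors w. -/
def sigMin {ι ι' : Type*} [Fintype ι] [Fintype ι'] (B : Matrix ι ι' ℝ) : ℝ :=
  sInf {c | ∃ w, vnorm w = 1 ∧ c = vnorm (Bᵀ.mulVec w)}

/-- The k-th column of a matrix. -/
def matCol {ι ι' : Type*} (B : Matrix ι ι' ℝ) (k : ι') : ι → ℝ := fun i => B i k

/-- Subspace distance SD(U₁,U₂) := ‖(I − U₁U₁ᵀ)U₂‖_F. -/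
def SD {n r : ℕ} (U₁ U₂ : Matrix (Fin n) (Fin r) ℝ) : ℝ :=
  frob ((1 - U₁ * U₁ᵀ) * U₂)

/-- The standard Gaussian measure on ℝ. -/
def stdGaussian : Measure ℝ := gaussianReal 0 1

instance : IsProbabilityMeasure stdGaussian :=
  inferInstanceAs (IsProbabilityMeasure (gaussianReal 0 1))

/-- A standard Gaussian random vector in ℝⁿ (i.i.d. N(0,1) coordinates). -/
def gaussianVec (n : ℕ) : Measure (Fin n → ℝ) := Measure.pi fun _ => stdGaussian

instance (n : ℕ) : IsProbabilityMeasure (gaussianVec n) := by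
  unfold gaussianVec; infer_instance

/-- i.i.d. standard Gaussian random vectors a_{k i} ∈ ℝⁿ, k ∈ [q], i ∈ [m]. -/
def gaussianMatrices (q m n : ℕ) : Measure (Fin q → Fin m → Fin n → ℝ) :=
  Measure.pi fun _ => Measure.pi fun _ => gaussianVec n

instance (q m n : ℕ) : IsProbabilityMeasure (gaussianMatrices q m n) := by
  unfold gaussianMatrices; infer_instance

/-- Truncated spectral-initialization matrix X̂₀ = (1/m) Σ_{k,i} a_ki y_ki 1{y_ki² ≤ α} e_kᵀ. -/
def initMat {n q m : ℕ} (xstar : Fin q → Fin n → ℝ) (α : ℝ)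
    (ω : Fin q → Fin m → Fin n → ℝ) : Matrix (Fin n) (Fin q) ℝ :=
  Matrix.of fun j k => (1 / (m : ℝ)) * ∑ i, ω k i j * (ω k i ⬝ᵥ xstar k) *
    (if (ω k i ⬝ᵥ xstar k) ^ 2 ≤ α then 1 else 0)

/-- Data-dependent truncation threshold α := C̃ Σ_{k,i} y_ki² / (mq). -/
def initAlpha {n q m : ℕ} (xstar : Fin q → Fin n → ℝ) (Ctil : ℝ)
    (ω : Fin q → Fin m → Fin n → ℝ) : ℝ :=
  Ctil * ((∑ k, ∑ i, (ω k i ⬝ᵥ xstar k) ^ 2) / ((m : ℝ) * q))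

/-- β(α) := E[ζ² 1{‖x‖² ζ² ≤ α}] for ζ standard Gaussian. -/
def betaK (normx α : ℝ) : ℝ :=
  ∫ z, z ^ 2 * (if normx ^ 2 * z ^ 2 ≤ α then 1 else 0) ∂stdGaussian

/-- The least-squares estimate b̂ := (UᵀAᵀAU)⁻¹ Uᵀ Aᵀ A x. -/
def lsEst {n r m : ℕ} (U : Matrix (Fin n) (Fin r) ℝ) (A : Matrix (Fin m) (Fin n) ℝ)
    (x : Fin n → ℝ) : Fin r → ℝ :=
  ((Uᵀ * Aᵀ * A * U)⁻¹ * Uᵀ * Aᵀ * A).mulVec x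

/-- Gradient w.r.t. U of the squared loss: Σ_k Aᵀ(AUb̂_k − Ax*_k)b̂_kᵀ. -/
def gradU {n r q m : ℕ} (U : Matrix (Fin n) (Fin r) ℝ)
    (A : Fin q → Matrix (Fin m) (Fin n) ℝ) (xstar : Fin q → Fin n → ℝ)
    (bhat : Fin q → Fin r → ℝ) : Matrix (Fin n) (Fin r) ℝ :=
  ∑ k, (A k)ᵀ * vecMulVec ((A k).mulVec (U.mulVec (bhat k) - xstar k)) (bhat k)

/-- `U` has orthonormal columns whose span is the span of eigenvectors of `S`
corresponding to its `r` largest eigenvalues: `S` maps the column span of `U` into itself,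
and wᵀSw ≥ zᵀSz for unit w in the span and unit z orthogonal to it. -/
def IsTopREigenBasis {n r : ℕ} (S : Matrix (Fin n) (Fin n) ℝ)
    (U : Matrix (Fin n) (Fin r) ℝ) : Prop :=
  Uᵀ * U = 1 ∧ (∃ M : Matrix (Fin r) (Fin r) ℝ, S * U = U * M) ∧
  ∀ w z : Fin n → ℝ, (∃ cvec : Fin r → ℝ, w = U.mulVec cvec) → Uᵀ.mulVec z = 0 →
    vnorm w = 1 → vnorm z = 1 → z ⬝ᵥ S.mulVec z ≤ w ⬝ᵥ S.mulVec w

/-- Sample sizes for the 2T+1 sample splits: batch τ ∈ {0,…,T} has m τ rows,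
batch τ = T + t (t ∈ {1,…,T}) has m t rows. -/
def msize (m : ℕ → ℕ) (T τ : ℕ) : ℕ := if τ ≤ T then m τ else m (τ - T)

/-- The joint distribution of all 2T+1 independent sample batches of i.i.d. standard
Gaussian measurement vectors. -/
def splitGauss (m : ℕ → ℕ) (T q n : ℕ) :
    Measure (∀ τ : Fin (2 * T + 1), Fin q → Fin (msize m T τ.1) → Fin n → ℝ) :=
  Measure.pi fun τ => gaussianMatrices q (msize m T τ.1) n

instance (m : ℕ → ℕ) (T q n : ℕ) : IsProbabilityMeasure (splitGauss m T q n) := by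
  unfold splitGauss; infer_instance

end

/-! Write `s = η/m`, `P = I − U*U*ᵀ`, `G = GradU` and `Û⁺ = U − sG`. Because `U` has orthonormal
columns, `‖Û⁺w‖ ≥ (1 − s‖G‖)‖w‖`; as `U⁺` also has orthonormal columns, the same lower bound holds
for `R⁺`, so `‖(R⁺)⁻¹‖ ≤ 1/(1 − s‖G‖)` and `‖PU⁺‖_F = ‖PÛ⁺(R⁺)⁻¹‖_F ≤ ‖PÛ⁺‖_F/(1 − s‖G‖)`.
Splitting each residual as `a_kiᵀUb̂_k − y_ki = a_kiᵀ(PU)b̂_k − (y_ki − a_kiᵀU*U*ᵀUb̂_k)` gives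
`G = 𝒜*𝒜(PU) − Term2`, hence `PÛ⁺ = P(PU − s𝒜*𝒜(PU)) + s·P·Term2`. In vec coordinates
`PU − s𝒜*𝒜(PU)` is `(I − s·Hess) vec(PU)`, and `P` is an orthogonal projection, so it does not
increase Frobenius norms. -/

open scoped Matrix.Norms.L2Operator

section Norms
variable {l m n : Type*} [Fintype l] [Fintype m] [Fintype n]

lemma vnorm_eq_norm (v : m → ℝ) : vnorm v = ‖WithLp.toLp 2 v‖ := by
  simp [vnorm, EuclideanSpace.norm_eq, sq_abs]

lemma vnorm_eq_sqrt_dotProduct (v : m → ℝ) : vnorm v = √(v ⬝ᵥ v) := by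
  simp [vnorm, dotProduct, sq]

lemma frob_eq_vnorm_vec_transpose (M : Matrix m n ℝ) : frob M = vnorm Mᵀ.vec := by
  simp only [frob, vnorm, Fintype.sum_prod_type]; rfl

lemma frob_eq_sqrt_sum_vnorm_sq (M : Matrix m n ℝ) : frob M = √(∑ i, vnorm (M i) ^ 2) := by
  simp only [frob, vnorm, Real.sq_sqrt (Finset.sum_nonneg fun _ _ => sq_nonneg _)]

lemma frob_transpose (M : Matrix m n ℝ) : frob Mᵀ = frob M := by
  rw [frob, frob, Finset.sum_comm]; rfl

lemma frob_add_le (M N : Matrix m n ℝ) : frob (M + N) ≤ frob M + frob N := by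
  simp only [frob_eq_vnorm_vec_transpose, Matrix.transpose_add, Matrix.vec_add, vnorm_eq_norm,
    WithLp.toLp_add]
  exact norm_add_le _ _

lemma frob_smul (c : ℝ) (M : Matrix m n ℝ) : frob (c • M) = |c| * frob M := by
  simp only [frob_eq_vnorm_vec_transpose, Matrix.transpose_smul, Matrix.vec_smul, vnorm_eq_norm,
    WithLp.toLp_smul, norm_smul, Real.norm_eq_abs]

lemma spec_eq_l2_opNorm [DecidableEq n] (M : Matrix m n ℝ) : spec M = ‖M‖ := by
  rw [Matrix.l2_opNorm_def, ← ContinuousLinearMap.sSup_sphere_eq_norm, spec]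
  congr 1
  ext c
  constructor
  · rintro ⟨z, hz, rfl⟩
    exact ⟨WithLp.toLp 2 z, by simpa [vnorm_eq_norm] using hz, by simp [vnorm_eq_norm]⟩
  · rintro ⟨z, hz, rfl⟩
    exact ⟨z.ofLp, by simpa [vnorm_eq_norm] using hz, by rw [vnorm_eq_norm]; rfl⟩

lemma spec_nonneg (M : Matrix m n ℝ) : 0 ≤ spec M := by
  classical
  exact spec_eq_l2_opNorm M ▸ norm_nonneg M

lemma vnorm_mulVec_le (M : Matrix m n ℝ) (v : n → ℝ) : vnorm (M *ᵥ v) ≤ spec M * vnorm v := by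
  classical
  rw [spec_eq_l2_opNorm, vnorm_eq_norm, vnorm_eq_norm]
  exact M.l2_opNorm_mulVec (WithLp.toLp 2 v)

lemma spec_le_of_forall_vnorm_mulVec_le {M : Matrix m n ℝ} {C : ℝ} (hC : 0 ≤ C)
    (h : ∀ v, vnorm (M *ᵥ v) ≤ C * vnorm v) : spec M ≤ C := by
  classical
  rw [spec_eq_l2_opNorm, Matrix.l2_opNorm_def]
  refine ContinuousLinearMap.opNorm_le_bound _ hC fun v => ?_
  have hv := h v.ofLp
  rw [vnorm_eq_norm, vnorm_eq_norm] at hv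
  exact hv

lemma spec_transpose (M : Matrix m n ℝ) : spec Mᵀ = spec M := by
  classical
  rw [spec_eq_l2_opNorm, spec_eq_l2_opNorm, ← Matrix.conjTranspose_eq_transpose_of_trivial,
    Matrix.l2_opNorm_conjTranspose]

lemma frob_mul_le_frob_mul_spec (M : Matrix l m ℝ) (N : Matrix m n ℝ) :
    frob (M * N) ≤ frob M * spec N := by
  have hrow : ∀ i, vnorm ((M * N) i) ≤ spec N * vnorm (M i) := fun i => by
    rw [Matrix.mul_apply_eq_vecMul, ← Matrix.mulVec_transpose, ← spec_transpose N]
    exact vnorm_mulVec_le Nᵀ (M i)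
  rw [frob_eq_sqrt_sum_vnorm_sq, frob_eq_sqrt_sum_vnorm_sq, ← Real.sqrt_sq (spec_nonneg N),
    ← Real.sqrt_mul (Finset.sum_nonneg fun _ _ => sq_nonneg _), Finset.sum_mul]
  refine Real.sqrt_le_sqrt (Finset.sum_le_sum fun i _ => ?_)
  rw [← mul_pow, mul_comm]
  exact pow_le_pow_left₀ (Real.sqrt_nonneg _) (hrow i) 2

lemma frob_mul_le_spec_mul_frob (M : Matrix l m ℝ) (N : Matrix m n ℝ) :
    frob (M * N) ≤ spec M * frob N := by
  rw [← frob_transpose, Matrix.transpose_mul, mul_comm, ← frob_transpose N, ← spec_transpose M]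
  exact frob_mul_le_frob_mul_spec _ _

end Norms

section Orthonormal
variable {l m n : Type*} [Fintype l] [Fintype m] [Fintype n] [DecidableEq n]

lemma vnorm_mulVec_of_orthonormal {V : Matrix m n ℝ} (hV : Vᵀ * V = 1) (x : n → ℝ) :
    vnorm (V *ᵥ x) = vnorm x := by
  rw [vnorm_eq_sqrt_dotProduct, vnorm_eq_sqrt_dotProduct, Matrix.dotProduct_mulVec,
    ← Matrix.mulVec_transpose, Matrix.mulVec_mulVec, hV, Matrix.one_mulVec, dotProduct_comm]

lemma isStarProjection_one_sub_mul_transpose [DecidableEq m] {V : Matrix m n ℝ}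
    (hV : Vᵀ * V = 1) : IsStarProjection (1 - V * Vᵀ) := by
  refine IsStarProjection.one_sub ⟨?_, ?_⟩
  · rw [IsIdempotentElem, Matrix.mul_assoc, ← Matrix.mul_assoc Vᵀ, hV, Matrix.one_mul]
  · rw [IsSelfAdjoint, Matrix.star_eq_conjTranspose, Matrix.conjTranspose_eq_transpose_of_trivial,
      Matrix.transpose_mul, Matrix.transpose_transpose]

lemma frob_one_sub_mul_transpose_mul_le [DecidableEq m] {V : Matrix m n ℝ} (hV : Vᵀ * V = 1)
    (M : Matrix m l ℝ) : frob ((1 - V * Vᵀ) * M) ≤ frob M := by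
  classical
  have hP : spec (1 - V * Vᵀ) ≤ 1 :=
    spec_eq_l2_opNorm (1 - V * Vᵀ) ▸ (isStarProjection_one_sub_mul_transpose hV).norm_le
  exact (frob_mul_le_spec_mul_frob _ _).trans (mul_le_of_le_one_left (Real.sqrt_nonneg _) hP)

end Orthonormal

section QR
variable {l m n : Type*} [Fintype l] [Fintype m] [Fintype n] [DecidableEq n]

lemma spec_inv_le_of_mul_vnorm_le {R : Matrix n n ℝ} (hR : IsUnit R.det) {c : ℝ} (hc : 0 < c)
    (h : ∀ w, c * vnorm w ≤ vnorm (R *ᵥ w)) : spec R⁻¹ ≤ c⁻¹ := by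
  refine spec_le_of_forall_vnorm_mulVec_le (inv_nonneg.2 hc.le) fun v => ?_
  have hv := h (R⁻¹ *ᵥ v)
  rw [Matrix.mulVec_mulVec, Matrix.mul_nonsing_inv _ hR, Matrix.one_mulVec] at hv
  rw [inv_mul_eq_div, le_div_iff₀ hc, mul_comm]
  exact hv

lemma frob_mul_orthonormal_factor_le {X Q : Matrix m n ℝ} {R : Matrix n n ℝ} (hQ : Qᵀ * Q = 1)
    (hR : IsUnit R.det) (hX : X = Q * R) {c : ℝ} (hc : 0 < c)
    (h : ∀ w, c * vnorm w ≤ vnorm (X *ᵥ w)) (P : Matrix l m ℝ) :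
    frob (P * Q) ≤ frob (P * X) / c := by
  have hRinv : spec R⁻¹ ≤ c⁻¹ := spec_inv_le_of_mul_vnorm_le hR hc fun w => by
    rw [← vnorm_mulVec_of_orthonormal hQ (R *ᵥ w), Matrix.mulVec_mulVec, ← hX]
    exact h w
  have hQ_eq : Q = X * R⁻¹ := by
    rw [hX, Matrix.mul_assoc, Matrix.mul_nonsing_inv _ hR, Matrix.mul_one]
  calc frob (P * Q) = frob (P * X * R⁻¹) := by rw [hQ_eq, Matrix.mul_assoc]
    _ ≤ frob (P * X) * spec R⁻¹ := frob_mul_le_frob_mul_spec _ _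
    _ ≤ frob (P * X) / c := by
      rw [div_eq_mul_inv]; exact mul_le_mul_of_nonneg_left hRinv (Real.sqrt_nonneg _)

lemma mul_vnorm_le_vnorm_sub_smul_mulVec {U : Matrix m n ℝ} (hU : Uᵀ * U = 1)
    (G : Matrix m n ℝ) {s : ℝ} (hs : 0 ≤ s) (w : n → ℝ) :
    (1 - s * spec G) * vnorm w ≤ vnorm ((U - s • G) *ᵥ w) := by
  have hG : vnorm (s • G *ᵥ w) ≤ s * (spec G * vnorm w) := by
    rw [vnorm_eq_norm, WithLp.toLp_smul, norm_smul, Real.norm_of_nonneg hs, ← vnorm_eq_norm]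
    exact mul_le_mul_of_nonneg_left (vnorm_mulVec_le G w) hs
  have htri : vnorm (U *ᵥ w) - vnorm (s • G *ᵥ w) ≤ vnorm (U *ᵥ w - s • G *ᵥ w) := by
    simp only [vnorm_eq_norm, WithLp.toLp_sub]
    exact norm_sub_norm_le _ _
  rw [vnorm_mulVec_of_orthonormal hU] at htri
  rw [Matrix.sub_mulVec, Matrix.smul_mulVec]
  linarith

end QR

section GradientStep
variable {m n κ ι : Type*} [Fintype m] [Fintype n] [Fintype κ] [Fintype ι]

/-- The normal operator `𝒜*𝒜` of the measurement map `W ↦ (a_kiᵀ W b_k)_{k,i}`. -/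
def normalOp (a : κ → ι → m → ℝ) (b : κ → n → ℝ) (W : Matrix m n ℝ) : Matrix m n ℝ :=
  ∑ k, ∑ i, (a k i ⬝ᵥ W *ᵥ b k) • vecMulVec (a k i) (b k)

-- `Mᵀ.vec p = M p.1 p.2`: the row-major vectorization in which `Hess` is written.
lemma vecMulVec_vec_transpose_mulVec (u : m → ℝ) (v : n → ℝ) (W : Matrix m n ℝ) :
    vecMulVec (vecMulVec u v)ᵀ.vec (vecMulVec u v)ᵀ.vec *ᵥ Wᵀ.vec =
      (u ⬝ᵥ W *ᵥ v) • (vecMulVec u v)ᵀ.vec := by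
  rw [Matrix.vecMulVec_mulVec, op_smul_eq_smul]
  congr 1
  simp only [dotProduct, Fintype.sum_prod_type, Matrix.mulVec, Finset.mul_sum]
  exact Finset.sum_congr rfl fun i _ => Finset.sum_congr rfl fun j _ =>
    show u i * v j * W i j = u i * (W i j * v j) by ring

lemma hessian_mulVec_vec_transpose (a : κ → ι → m → ℝ) (b : κ → n → ℝ) (W : Matrix m n ℝ) :
    (∑ k, ∑ i, vecMulVec (fun p : m × n => a k i p.1 * b k p.2)
        (fun p : m × n => a k i p.1 * b k p.2)) *ᵥ Wᵀ.vec = (normalOp a b W)ᵀ.vec := by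
  simp only [normalOp, Matrix.sum_mulVec, Matrix.transpose_sum, Matrix.vec_sum,
    Matrix.transpose_smul, Matrix.vec_smul]
  exact Finset.sum_congr rfl fun k _ => Finset.sum_congr rfl fun i _ =>
    vecMulVec_vec_transpose_mulVec (a k i) (b k) W

lemma sum_residual_smul_eq_normalOp_sub (a : κ → ι → m → ℝ) (b : κ → n → ℝ) (y : κ → ι → ℝ)
    (U Z : Matrix m n ℝ) :
    ∑ k, ∑ i, (a k i ⬝ᵥ U *ᵥ b k - y k i) • vecMulVec (a k i) (b k) =
      normalOp a b (U - Z) - ∑ k, ∑ i, (y k i - a k i ⬝ᵥ Z *ᵥ b k) • vecMulVec (a k i) (b k) := by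
  simp only [normalOp, ← Finset.sum_sub_distrib, ← sub_smul, Matrix.sub_mulVec, dotProduct_sub]
  exact Finset.sum_congr rfl fun k _ => Finset.sum_congr rfl fun i _ => by congr 1; ring

lemma frob_projected_gradient_step_le [DecidableEq m] [DecidableEq n] {U V : Matrix m n ℝ}
    (hV : Vᵀ * V = 1) {s : ℝ} (hs : 0 ≤ s)
    (a : κ → ι → m → ℝ) (b : κ → n → ℝ) (y : κ → ι → ℝ) :
    frob ((1 - V * Vᵀ) *
        (U - s • ∑ k, ∑ i, (a k i ⬝ᵥ U *ᵥ b k - y k i) • vecMulVec (a k i) (b k))) ≤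
      spec (1 - s • ∑ k, ∑ i, vecMulVec (fun p : m × n => a k i p.1 * b k p.2)
          (fun p : m × n => a k i p.1 * b k p.2)) * frob ((1 - V * Vᵀ) * U) +
        s * frob ((1 - V * Vᵀ) *
          ∑ k, ∑ i, (y k i - a k i ⬝ᵥ (V * Vᵀ * U) *ᵥ b k) • vecMulVec (a k i) (b k)) := by
  set P := 1 - V * Vᵀ
  set T := ∑ k, ∑ i, (y k i - a k i ⬝ᵥ (V * Vᵀ * U) *ᵥ b k) • vecMulVec (a k i) (b k)
  set H := ∑ k, ∑ i, vecMulVec (fun p : m × n => a k i p.1 * b k p.2)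
    (fun p : m × n => a k i p.1 * b k p.2)
  set N := normalOp a b (P * U)
  have hPP : P * P = P := (isStarProjection_one_sub_mul_transpose hV).isIdempotentElem
  have hgrad : ∑ k, ∑ i, (a k i ⬝ᵥ U *ᵥ b k - y k i) • vecMulVec (a k i) (b k) = N - T := by
    have hPU : P * U = U - V * Vᵀ * U := by rw [Matrix.sub_mul, Matrix.one_mul]
    rw [sum_residual_smul_eq_normalOp_sub a b y U (V * Vᵀ * U), ← hPU]
  have hsplit : P * (U - s • (N - T)) = P * (P * U - s • N) + s • (P * T) := by
    rw [Matrix.mul_sub, Matrix.mul_sub, ← Matrix.mul_assoc, hPP, Matrix.mul_smul,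
      Matrix.mul_smul, Matrix.mul_sub, smul_sub]
    abel
  have hvec : (P * U - s • N)ᵀ.vec = (1 - s • H) *ᵥ (P * U)ᵀ.vec := by
    rw [Matrix.sub_mulVec, Matrix.one_mulVec, Matrix.smul_mulVec, hessian_mulVec_vec_transpose,
      Matrix.transpose_sub, Matrix.vec_sub, Matrix.transpose_smul, Matrix.vec_smul]
  calc frob (P * (U - s • ∑ k, ∑ i, (a k i ⬝ᵥ U *ᵥ b k - y k i) • vecMulVec (a k i) (b k)))
      = frob (P * (P * U - s • N) + s • (P * T)) := by rw [hgrad, hsplit]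
    _ ≤ frob (P * U - s • N) + s * frob (P * T) := by
      refine (frob_add_le _ _).trans (add_le_add (frob_one_sub_mul_transpose_mul_le hV _) ?_)
      rw [frob_smul, abs_of_nonneg hs]
    _ ≤ spec (1 - s • H) * frob (P * U) + s * frob (P * T) := by
      rw [frob_eq_vnorm_vec_transpose, hvec, frob_eq_vnorm_vec_transpose (P * U)]
      gcongr
      exact vnorm_mulVec_le _ _

end GradientStep

theorem lemma34_general (n r q m : ℕ) (η : ℝ) (hη : 0 < η)
    (U Ustar Uplus : Matrix (Fin n) (Fin r) ℝ) (Rplus : Matrix (Fin r) (Fin r) ℝ)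
    (bhat : Fin q → Fin r → ℝ) (a : Fin q → Fin m → Fin n → ℝ) (y : Fin q → Fin m → ℝ)
    (hU : Uᵀ * U = 1) (hUs : Ustarᵀ * Ustar = 1) (hUp : Uplusᵀ * Uplus = 1)
    (hR : IsUnit Rplus.det)
    (hQR : U - (η / (m : ℝ)) •
        (∑ k, ∑ i, (a k i ⬝ᵥ U.mulVec (bhat k) - y k i) • vecMulVec (a k i) (bhat k)) =
      Uplus * Rplus)
    (hsmall : (η / (m : ℝ)) * spec (∑ k, ∑ i,
        (a k i ⬝ᵥ U.mulVec (bhat k) - y k i) • vecMulVec (a k i) (bhat k)) < 1) :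
    frob ((1 - Ustar * Ustarᵀ) * Uplus) ≤
      (spec ((1 : Matrix (Fin n × Fin r) (Fin n × Fin r) ℝ) -
          (η / (m : ℝ)) • ∑ k, ∑ i,
            vecMulVec (fun p : Fin n × Fin r => a k i p.1 * bhat k p.2)
              (fun p : Fin n × Fin r => a k i p.1 * bhat k p.2)) *
        frob ((1 - Ustar * Ustarᵀ) * U) +
        (η / (m : ℝ)) * frob ((1 - Ustar * Ustarᵀ) *
          ∑ k, ∑ i, (y k i - a k i ⬝ᵥ (Ustar * Ustarᵀ * U).mulVec (bhat k)) •
            vecMulVec (a k i) (bhat k))) /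
      (1 - (η / (m : ℝ)) * spec (∑ k, ∑ i,
        (a k i ⬝ᵥ U.mulVec (bhat k) - y k i) • vecMulVec (a k i) (bhat k))) := by
  have hs : 0 ≤ η / (m : ℝ) := div_nonneg hη.le (Nat.cast_nonneg m)
  have hc := sub_pos.2 hsmall
  refine (frob_mul_orthonormal_factor_le hUp hR hQR hc
    (mul_vnorm_le_vnorm_sub_smul_mulVec hU _ hs) _).trans ?_
  gcongr
  exact frob_projected_gradient_step_le hUs hs a bhat y

/-- **Lemma 3.4** (deterministic algebra bound for one projected-GD step). -/
theorem lemma34 (n r q m : ℕ) (hm : 1 ≤ m) (η : ℝ) (hη : 0 < η)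
    (U Ustar Uplus : Matrix (Fin n) (Fin r) ℝ) (Rplus : Matrix (Fin r) (Fin r) ℝ)
    (bhat : Fin q → Fin r → ℝ) (a : Fin q → Fin m → Fin n → ℝ) (y : Fin q → Fin m → ℝ)
    (hU : Uᵀ * U = 1) (hUs : Ustarᵀ * Ustar = 1) (hUp : Uplusᵀ * Uplus = 1)
    (hR : IsUnit Rplus.det)
    (hQR : U - (η / (m : ℝ)) •
        (∑ k, ∑ i, (a k i ⬝ᵥ U.mulVec (bhat k) - y k i) • vecMulVec (a k i) (bhat k)) =
      Uplus * Rplus)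
    (hsmall : (η / (m : ℝ)) * spec (∑ k, ∑ i,
        (a k i ⬝ᵥ U.mulVec (bhat k) - y k i) • vecMulVec (a k i) (bhat k)) < 1) :
    frob ((1 - Ustar * Ustarᵀ) * Uplus) ≤
      (spec ((1 : Matrix (Fin n × Fin r) (Fin n × Fin r) ℝ) -
          (η / (m : ℝ)) • ∑ k, ∑ i,
            vecMulVec (fun p : Fin n × Fin r => a k i p.1 * bhat k p.2)
              (fun p : Fin n × Fin r => a k i p.1 * bhat k p.2)) *
        frob ((1 - Ustar * Ustarᵀ) * U) +
        (η / (m : ℝ)) * frob ((1 - Ustar * Ustarᵀ) *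
          ∑ k, ∑ i, (y k i - a k i ⬝ᵥ (Ustar * Ustarᵀ * U).mulVec (bhat k)) •
            vecMulVec (a k i) (bhat k))) /
      (1 - (η / (m : ℝ)) * spec (∑ k, ∑ i,
        (a k i ⬝ᵥ U.mulVec (bhat k) - y k i) • vecMulVec (a k i) (bhat k))) :=
  lemma34_general n r q m η hη U Ustar Uplus Rplus bhat a y hU hUs hUp hR hQR hsmall
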